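/- Let Φ be any Young function and let φ₁, φ₂ be positive measurable functions on ℝⁿ × (0,∞) satisfying: there is C > 0 such that for all x ∈ ℝⁿ and r > 0, sup_{r<t<∞} Φ⁻¹(t⁻ⁿ) · ess sup_{t<s<∞} φ₁(x,s)/Φ⁻¹(s⁻ⁿ) ≤ C·φ₂(x,r). Then the Hardy–Littlewood maximal operator M is bounded from M_{Φ,φ₁}(ℝⁿ) to WM_{Φ,φ₂}(ℝⁿ): there is C' > 0 with ‖Mf‖_{WM_{Φ,φ₂}} ≤ C'·‖f‖_{M_{Φ,φ₁}} for all locally integrable f. -/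

import Mathlib

open MeasureTheory Metric Set NNReal ENNReal Filter

noncomputable section

/-- A Young function: a convex, left-continuous `Φ : [0,∞) → [0,∞]` with `Φ(0) = 0`
and `Φ(r) → ∞` as `r → ∞`. -/
structure YoungFunction where
  toFun : ℝ≥0 → ℝ≥0∞
  map_zero' : toFun 0 = 0
  convex' : ∀ (s t a b : ℝ≥0), a + b = 1 →
    toFun (a * s + b * t) ≤ (a : ℝ≥0∞) * toFun s + (b : ℝ≥0∞) * toFun t
  left_continuous' : ∀ s : ℝ≥0, 0 < s → toFun s = ⨆ (t : ℝ≥0) (_ : t < s), toFun t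
  tendsto_top' : Tendsto toFun atTop (nhds (⊤ : ℝ≥0∞))

namespace YoungFunction

/-- The generalized inverse `Φ⁻¹(s) = inf {r ≥ 0 : Φ(r) > s}` (with `inf ∅ = ∞`). -/
def inv (Φ : YoungFunction) (s : ℝ≥0∞) : ℝ≥0∞ :=
  sInf ((fun r : ℝ≥0 => (r : ℝ≥0∞)) '' {r : ℝ≥0 | s < Φ.toFun r})

/-- The canonical extension of `Φ` to `[0,∞]`. -/
def ext (Φ : YoungFunction) (s : ℝ≥0∞) : ℝ≥0∞ :=
  if s = ⊤ then ⊤ else Φ.toFun s.toNNReal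

/-- `Φ` is of lower type `p`: `Φ(st) ≤ C t^p Φ(s)` for all `t ∈ [0,1]`, `s ≥ 0`. -/
def IsLowerType (Φ : YoungFunction) (p : ℝ) : Prop :=
  ∃ C : ℝ, 0 < C ∧ ∀ (s t : ℝ≥0), t ≤ 1 →
    Φ.toFun (s * t) ≤ ENNReal.ofReal C * (t : ℝ≥0∞) ^ p * Φ.toFun s

/-- `Φ` is of upper type `p`: `Φ(st) ≤ C t^p Φ(s)` for all `t ≥ 1`, `s ≥ 0`. -/
def IsUpperType (Φ : YoungFunction) (p : ℝ) : Prop :=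
  ∃ C : ℝ, 0 < C ∧ ∀ (s t : ℝ≥0), 1 ≤ t →
    Φ.toFun (s * t) ≤ ENNReal.ofReal C * (t : ℝ≥0∞) ^ p * Φ.toFun s

end YoungFunction

variable {X : Type*} [MeasurableSpace X]

/-- The Luxemburg norm `‖g‖_{L_Φ(E)}` of an `[0,∞]`-valued function `g` on a set `E`. -/
def luxNormE (Φ : YoungFunction) (μ : Measure X) (E : Set X) (g : X → ℝ≥0∞) : ℝ≥0∞ :=
  sInf {lam : ℝ≥0∞ | 0 < lam ∧ ∫⁻ x in E, Φ.ext (g x / lam) ∂μ ≤ 1}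

/-- The Luxemburg norm `‖f‖_{L_Φ(E)}` of a real-valued function `f` on a set `E`. -/
def luxNorm (Φ : YoungFunction) (μ : Measure X) (E : Set X) (f : X → ℝ) : ℝ≥0∞ :=
  luxNormE Φ μ E fun x => (‖f x‖₊ : ℝ≥0∞)

/-- The weak Luxemburg norm `‖g‖_{WL_Φ(E)}`. -/
def wLuxNormE (Φ : YoungFunction) (μ : Measure X) (E : Set X) (g : X → ℝ≥0∞) : ℝ≥0∞ :=
  sInf {lam : ℝ≥0∞ | 0 < lam ∧
    ∀ t : ℝ≥0, 0 < t → Φ.toFun t * μ {x | x ∈ E ∧ (t : ℝ≥0∞) < g x / lam} ≤ 1}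

/-- The weak Luxemburg norm of a real-valued function. -/
def wLuxNorm (Φ : YoungFunction) (μ : Measure X) (E : Set X) (f : X → ℝ) : ℝ≥0∞ :=
  wLuxNormE Φ μ E fun x => (‖f x‖₊ : ℝ≥0∞)

/-- Euclidean space `ℝⁿ` with Lebesgue measure. -/
abbrev En (n : ℕ) := EuclideanSpace ℝ (Fin n)

/-- The fractional maximal operator
`M_α f(x) = sup_{t>0} |B(x,t)|^{α/n - 1} ∫_{B(x,t)} |f(y)| dy`. -/
def fracMaximal (n : ℕ) (α : ℝ) (f : En n → ℝ) (x : En n) : ℝ≥0∞ :=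
  ⨆ (t : ℝ) (_ : 0 < t),
    volume (ball x t) ^ (α / (n : ℝ) - 1) * ∫⁻ y in ball x t, (‖f y‖₊ : ℝ≥0∞)

/-- The commutator of the fractional maximal operator
`M_{b,α} f(x) = sup_{t>0} |B(x,t)|^{α/n - 1} ∫_{B(x,t)} |b(x)-b(y)||f(y)| dy`. -/
def commFracMaximal (n : ℕ) (α : ℝ) (b f : En n → ℝ) (x : En n) : ℝ≥0∞ :=
  ⨆ (t : ℝ) (_ : 0 < t),
    volume (ball x t) ^ (α / (n : ℝ) - 1) *
      ∫⁻ y in ball x t, (‖b x - b y‖₊ : ℝ≥0∞) * (‖f y‖₊ : ℝ≥0∞)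

/-- The Hardy–Littlewood maximal operator. -/
def hlMaximal (n : ℕ) (f : En n → ℝ) (x : En n) : ℝ≥0∞ :=
  ⨆ (t : ℝ) (_ : 0 < t),
    (volume (ball x t))⁻¹ * ∫⁻ y in ball x t, (‖f y‖₊ : ℝ≥0∞)

/-- The commutator of the Hardy–Littlewood maximal operator. -/
def commMaximal (n : ℕ) (b f : En n → ℝ) (x : En n) : ℝ≥0∞ :=
  ⨆ (t : ℝ) (_ : 0 < t),
    (volume (ball x t))⁻¹ * ∫⁻ y in ball x t, (‖b x - b y‖₊ : ℝ≥0∞) * (‖f y‖₊ : ℝ≥0∞)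

/-- The generalized Orlicz–Morrey norm `‖g‖_{M_{Φ,φ}}` (for `[0,∞]`-valued functions). -/
def morreyNormE (n : ℕ) (Φ : YoungFunction) (φ : En n → ℝ → ℝ) (g : En n → ℝ≥0∞) : ℝ≥0∞ :=
  ⨆ (x : En n) (r : ℝ) (_ : 0 < r),
    (ENNReal.ofReal (φ x r))⁻¹ * Φ.inv (ENNReal.ofReal r ^ (-(n : ℝ))) *
      luxNormE Φ volume (ball x r) g

/-- The generalized Orlicz–Morrey norm of a real-valued function. -/
def morreyNorm (n : ℕ) (Φ : YoungFunction) (φ : En n → ℝ → ℝ) (f : En n → ℝ) : ℝ≥0∞ :=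
  morreyNormE n Φ φ fun x => (‖f x‖₊ : ℝ≥0∞)

/-- The weak generalized Orlicz–Morrey norm `‖g‖_{WM_{Φ,φ}}`. -/
def wMorreyNormE (n : ℕ) (Φ : YoungFunction) (φ : En n → ℝ → ℝ) (g : En n → ℝ≥0∞) : ℝ≥0∞ :=
  ⨆ (x : En n) (r : ℝ) (_ : 0 < r),
    (ENNReal.ofReal (φ x r))⁻¹ * Φ.inv (ENNReal.ofReal r ^ (-(n : ℝ))) *
      wLuxNormE Φ volume (ball x r) g

/-- The Orlicz–Morrey norm `‖g‖_{M_{Φ,λ}}` with exponent `λ`. -/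
def morreyLamNormE (n : ℕ) (Φ : YoungFunction) (lam : ℝ) (g : En n → ℝ≥0∞) : ℝ≥0∞ :=
  ⨆ (x : En n) (r : ℝ) (_ : 0 < r),
    Φ.inv (ENNReal.ofReal r ^ (-lam)) * luxNormE Φ volume (ball x r) g

/-- The Orlicz–Morrey norm with exponent `λ` of a real-valued function. -/
def morreyLamNorm (n : ℕ) (Φ : YoungFunction) (lam : ℝ) (f : En n → ℝ) : ℝ≥0∞ :=
  morreyLamNormE n Φ lam fun x => (‖f x‖₊ : ℝ≥0∞)

/-- The average `f_{B(x,r)}` of `f` over the ball `B(x,r)`. -/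
def ballAvg (n : ℕ) (b : En n → ℝ) (x : En n) (r : ℝ) : ℝ :=
  ⨍ y in ball x r, b y

/-- The BMO seminorm `‖b‖_*`. -/
def bmoSeminorm (n : ℕ) (b : En n → ℝ) : ℝ≥0∞ :=
  ⨆ (x : En n) (r : ℝ) (_ : 0 < r),
    ENNReal.ofReal (⨍ y in ball x r, |b y - ballAvg n b x r|)

/-!
Fix a ball `B(x,r)` and let `T = sup_{t>r} Φ⁻¹(t⁻ⁿ) ‖f‖_{L_Φ(B(x,t))}`. On `B(x,r)` we have
`Mf ≤ M(f·1_{B(x,2r)}) + A`, where `A` bounds the averages of `|f|` over the balls `B(z,t)` with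
`z ∈ B(x,r)`, `t ≥ r`. The maximal operator is of weak type `(Φ,Φ)` for every Young function
(Vitali covering plus `k Φ(t) ≤ Φ(k t)`), so the first term contributes
`≲ Φ⁻¹(r⁻ⁿ) ‖f‖_{L_Φ(B(x,2r))} ≲ T`, using `Φ⁻¹(r⁻ⁿ) ≤ 3ⁿ Φ⁻¹((3r)⁻ⁿ)`. The Orlicz form of
Hölder's inequality, `∫_B |f| ≤ 2 |B| Φ⁻¹(|B|⁻¹) ‖f‖_{L_Φ(B)}`, on `B(x,3t) ⊇ B(z,t)` gives
`A ≲ T`, and a constant `A` has weak norm `≲ A / Φ⁻¹(r⁻ⁿ)` on `B(x,r)`.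
Finally `‖f‖_{L_Φ(B(x,t))}` is nondecreasing in `t`, so it is bounded by its values at almost
every `s > t`, hence by `ess sup_{s>t} φ₁(x,s)/Φ⁻¹(s⁻ⁿ) · ‖f‖_{M_{Φ,φ₁}}`; the supremal condition
then gives `T ≤ C φ₂(x,r) ‖f‖_{M_{Φ,φ₁}}`.
-/

theorem ENNReal.ofReal_rpow_neg_natCast {n : ℕ} {s : ℝ} (hs : 0 < s) :
    ENNReal.ofReal s ^ (-(n : ℝ)) = (ENNReal.ofReal (s ^ n))⁻¹ := by
  rw [ENNReal.rpow_neg, ENNReal.rpow_natCast, ← ENNReal.ofReal_pow hs.le]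

namespace YoungFunction

variable (Φ : YoungFunction)

theorem toFun_le_div_mul {s t : ℝ≥0} (hst : s ≤ t) (ht : t ≠ 0) :
    Φ.toFun s ≤ ((s / t : ℝ≥0) : ℝ≥0∞) * Φ.toFun t := by
  have h := Φ.convex' t 0 (s / t) (1 - s / t)
    (add_tsub_cancel_of_le (div_le_one_of_le₀ hst zero_le))
  rwa [mul_zero, add_zero, div_mul_cancel₀ _ ht, Φ.map_zero', mul_zero, add_zero] at h

theorem monotone_toFun : Monotone Φ.toFun := by
  intro s t hst
  rcases eq_or_ne t 0 with rfl | ht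
  · rw [nonpos_iff_eq_zero.mp hst]
  calc Φ.toFun s ≤ ((s / t : ℝ≥0) : ℝ≥0∞) * Φ.toFun t := Φ.toFun_le_div_mul hst ht
    _ ≤ Φ.toFun t := mul_le_of_le_one_left' (by exact_mod_cast div_le_one_of_le₀ hst zero_le)

/-- `Φ(s)/s` is nondecreasing. -/
theorem toFun_mul_le_toFun_mul {s t : ℝ≥0} (hst : s ≤ t) :
    Φ.toFun s * t ≤ Φ.toFun t * s := by
  rcases eq_or_ne t 0 with rfl | ht
  · rw [nonpos_iff_eq_zero.mp hst]
  calc Φ.toFun s * t ≤ ((s / t : ℝ≥0) : ℝ≥0∞) * Φ.toFun t * t := by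
        gcongr; exact Φ.toFun_le_div_mul hst ht
    _ = Φ.toFun t * s := by
        rw [mul_right_comm, mul_comm, ← ENNReal.coe_mul, div_mul_cancel₀ _ ht]

theorem natCast_mul_toFun_le (k : ℕ) (t : ℝ≥0) :
    (k : ℝ≥0∞) * Φ.toFun t ≤ Φ.toFun (k * t) := by
  rcases eq_or_ne t 0 with rfl | ht
  · simp [Φ.map_zero']
  rcases Nat.eq_zero_or_pos k with rfl | hk
  · simp
  have h := Φ.toFun_mul_le_toFun_mul
    (le_mul_of_one_le_left zero_le (by exact_mod_cast hk) : t ≤ k * t)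
  refine (ENNReal.mul_le_mul_iff_left (by exact_mod_cast ht) coe_ne_top).mp ?_
  calc (k : ℝ≥0∞) * Φ.toFun t * t = Φ.toFun t * ((k * t : ℝ≥0) : ℝ≥0∞) := by push_cast; ring
    _ ≤ Φ.toFun (k * t) * t := h

theorem ext_coe (s : ℝ≥0) : Φ.ext s = Φ.toFun s := by
  simp [YoungFunction.ext]

theorem ext_zero : Φ.ext 0 = 0 := by
  simpa [Φ.map_zero'] using Φ.ext_coe 0

theorem monotone_ext : Monotone Φ.ext := by
  intro a b hab
  rcases eq_or_ne b ⊤ with rfl | hb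
  · simp [YoungFunction.ext]
  lift b to ℝ≥0 using hb
  lift a to ℝ≥0 using ne_top_of_le_ne_top coe_ne_top hab
  rw [ext_coe, ext_coe]
  exact Φ.monotone_toFun (by exact_mod_cast hab)

theorem toFun_mul_le_mul_ext {s : ℝ≥0} {u : ℝ≥0∞} (hsu : (s : ℝ≥0∞) ≤ u) :
    Φ.toFun s * u ≤ s * Φ.ext u := by
  rcases eq_or_ne u ⊤ with rfl | hu
  · rcases eq_or_ne s 0 with rfl | hs
    · simp [Φ.map_zero']
    · simp [YoungFunction.ext, hs]
  lift u to ℝ≥0 using hu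
  rw [ext_coe, mul_comm (s : ℝ≥0∞)]
  exact Φ.toFun_mul_le_toFun_mul (by exact_mod_cast hsu)

theorem le_add_mul_ext {c u : ℝ≥0∞} {t : ℝ≥0} (hc : c⁻¹ ≤ Φ.toFun t) (hc0 : c ≠ 0)
    (hct : c ≠ ⊤) : u ≤ t + c * t * Φ.ext u := by
  rcases le_total u t with hut | htu
  · exact le_add_right hut
  refine le_add_left ?_
  calc u = c * (c⁻¹ * u) := by rw [← mul_assoc, ENNReal.mul_inv_cancel hc0 hct, one_mul]
    _ ≤ c * (Φ.toFun t * u) := by gcongr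
    _ ≤ c * (t * Φ.ext u) := mul_le_mul_right (Φ.toFun_mul_le_mul_ext htu) c
    _ = c * t * Φ.ext u := (mul_assoc _ _ _).symm

theorem inv_le_of_lt {u : ℝ≥0∞} {t : ℝ≥0} (h : u < Φ.toFun t) : Φ.inv u ≤ t :=
  sInf_le ⟨t, h, rfl⟩

theorem exists_lt_toFun_of_inv_lt {u b : ℝ≥0∞} (h : Φ.inv u < b) :
    ∃ t : ℝ≥0, (t : ℝ≥0∞) < b ∧ u < Φ.toFun t := by
  obtain ⟨_, ⟨t, ht, rfl⟩, htb⟩ := sInf_lt_iff.mp h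
  exact ⟨t, htb, ht⟩

theorem toFun_le_of_lt_inv {u : ℝ≥0∞} {t : ℝ≥0} (h : (t : ℝ≥0∞) < Φ.inv u) : Φ.toFun t ≤ u :=
  not_lt.mp fun h' => (Φ.inv_le_of_lt h').not_gt h

theorem monotone_inv : Monotone Φ.inv := fun _ _ huv =>
  sInf_le_sInf (image_mono fun _ hr => lt_of_le_of_lt huv hr)

theorem exists_lt_toFun {u : ℝ≥0∞} (hu : u ≠ ⊤) : ∃ t : ℝ≥0, u < Φ.toFun t :=
  (Φ.tendsto_top'.eventually (Ioi_mem_nhds hu.lt_top)).exists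

theorem inv_ne_top {u : ℝ≥0∞} (hu : u ≠ ⊤) : Φ.inv u ≠ ⊤ :=
  let ⟨_, ht⟩ := Φ.exists_lt_toFun hu
  ne_top_of_le_ne_top coe_ne_top (Φ.inv_le_of_lt ht)

theorem inv_le_natCast_mul {u v : ℝ≥0∞} {k : ℕ} (hk : 0 < k) (h : u ≤ k * v) :
    Φ.inv u ≤ k * Φ.inv v := by
  have hk0 : (k : ℝ≥0∞) ≠ 0 := by exact_mod_cast hk.ne'
  refine ENNReal.le_mul_of_forall_lt (.inl hk0) (.inl (natCast_ne_top k)) fun a ha b hb => ?_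
  obtain ⟨t, htb, ht⟩ := Φ.exists_lt_toFun_of_inv_lt hb
  have hkv : (k : ℝ≥0∞) * v < Φ.toFun (k * t) := by
    refine lt_of_lt_of_le ?_ (Φ.natCast_mul_toFun_le k t)
    exact (ENNReal.mul_lt_mul_iff_right hk0 (natCast_ne_top k)).mpr ht
  calc Φ.inv u ≤ ((k * t : ℝ≥0) : ℝ≥0∞) := Φ.inv_le_of_lt (h.trans_lt hkv)
    _ ≤ a * b := by push_cast; exact mul_le_mul' ha.le htb.le

/-- The factor `Φ⁻¹(t⁻ⁿ)` of the Orlicz–Morrey norms at radius `t`. -/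
def invNegPow (n : ℕ) (t : ℝ) : ℝ≥0∞ :=
  Φ.inv (ENNReal.ofReal t ^ (-(n : ℝ)))

variable {n : ℕ}

theorem invNegPow_anti {a b : ℝ} (ha : 0 < a) (hab : a ≤ b) :
    Φ.invNegPow n b ≤ Φ.invNegPow n a := by
  refine Φ.monotone_inv ?_
  rw [ENNReal.ofReal_rpow_neg_natCast ha, ENNReal.ofReal_rpow_neg_natCast (ha.trans_le hab)]
  exact ENNReal.inv_le_inv.mpr (ENNReal.ofReal_le_ofReal (pow_le_pow_left₀ ha.le hab n))

theorem invNegPow_ne_top {t : ℝ} (ht : 0 < t) : Φ.invNegPow n t ≠ ⊤ := by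
  refine Φ.inv_ne_top ?_
  rw [ENNReal.ofReal_rpow_neg_natCast ht]
  exact ENNReal.inv_ne_top.mpr (ENNReal.ofReal_pos.mpr (by positivity)).ne'

theorem invNegPow_le_natCast_mul {r s : ℝ} {k : ℕ} (hr : 0 < r) (hs : 0 < s)
    (hk : s ^ n ≤ k * r ^ n) : Φ.invNegPow n r ≤ k * Φ.invNegPow n s := by
  have hk0 : 0 < k := Nat.pos_of_ne_zero fun h => (pow_pos hs n).not_ge (by simpa [h] using hk)
  refine Φ.inv_le_natCast_mul hk0 ?_
  rw [ENNReal.ofReal_rpow_neg_natCast hr, ENNReal.ofReal_rpow_neg_natCast hs]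
  calc (ENNReal.ofReal (r ^ n))⁻¹ ≤ (ENNReal.ofReal (s ^ n / k))⁻¹ :=
        ENNReal.inv_le_inv.mpr (ENNReal.ofReal_le_ofReal
          (div_le_of_le_mul₀ (by positivity) (by positivity) (by linarith)))
    _ = k * (ENNReal.ofReal (s ^ n))⁻¹ := by
        rw [ENNReal.ofReal_div_of_pos (by exact_mod_cast hk0), ENNReal.ofReal_natCast,
          ENNReal.inv_div (.inl (natCast_ne_top k)) (.inl (by exact_mod_cast hk0.ne')),
          div_eq_mul_inv]

theorem invNegPow_ne_zero {r s : ℝ} (hr : 0 < r) (hs : 0 < s) (h : Φ.invNegPow n r ≠ 0) :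
    Φ.invNegPow n s ≠ 0 := by
  rcases le_total s r with hsr | hrs
  · exact ne_bot_of_le_ne_bot h (Φ.invNegPow_anti hs hsr)
  · obtain ⟨k, hk⟩ := exists_nat_ge ((s / r) ^ n)
    have hle := Φ.invNegPow_le_natCast_mul (k := k) hr hs (by
      rwa [div_pow, div_le_iff₀ (by positivity)] at hk)
    intro h0
    rw [h0, mul_zero] at hle
    exact h (nonpos_iff_eq_zero.mp hle)

end YoungFunction

section Luxemburg

variable {X : Type*} [MeasurableSpace X] (Φ : YoungFunction) {μ : Measure X} {E F : Set X}
  {g g₁ g₂ : X → ℝ≥0∞}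

theorem luxNormE_admissible_of_lt {b : ℝ≥0∞} (h : luxNormE Φ μ E g < b) :
    0 < b ∧ ∫⁻ x in E, Φ.ext (g x / b) ∂μ ≤ 1 := by
  obtain ⟨a, ⟨ha0, ha⟩, hab⟩ := sInf_lt_iff.mp h
  refine ⟨ha0.trans hab, le_trans (lintegral_mono fun x => Φ.monotone_ext ?_) ha⟩
  exact ENNReal.div_le_div_left hab.le _

theorem luxNormE_mono_set (hEF : E ⊆ F) : luxNormE Φ μ E g ≤ luxNormE Φ μ F g :=
  sInf_le_sInf fun _ hb => ⟨hb.1, le_trans (lintegral_mono_set hEF) hb.2⟩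

theorem luxNormE_univ_indicator (hE : MeasurableSet E) :
    luxNormE Φ μ univ (E.indicator g) = luxNormE Φ μ E g := by
  have hint (b : ℝ≥0∞) :
      ∫⁻ x, Φ.ext (E.indicator g x / b) ∂μ = ∫⁻ x in E, Φ.ext (g x / b) ∂μ := by
    rw [← lintegral_indicator hE]
    congr 1 with x
    by_cases hx : x ∈ E <;> simp [hx, Φ.ext_zero]
  simp only [luxNormE, Measure.restrict_univ, hint]

theorem setLIntegral_le_of_admissible {b : ℝ≥0∞} {t : ℝ≥0} (hb0 : b ≠ 0) (hbt : b ≠ ⊤)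
    (hE0 : μ E ≠ 0) (hE : μ E ≠ ⊤) (ht : (μ E)⁻¹ ≤ Φ.toFun t)
    (hint : ∫⁻ x in E, Φ.ext (g x / b) ∂μ ≤ 1) :
    ∫⁻ x in E, g x ∂μ ≤ 2 * μ E * (t * b) := by
  have hpt (x : X) : g x ≤ t * b + μ E * t * b * Φ.ext (g x / b) := by
    calc g x = g x / b * b := (ENNReal.div_mul_cancel hb0 hbt).symm
      _ ≤ (t + μ E * t * Φ.ext (g x / b)) * b :=
        mul_le_mul_left (Φ.le_add_mul_ext ht hE0 hE) b
      _ = t * b + μ E * t * b * Φ.ext (g x / b) := by ring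
  calc ∫⁻ x in E, g x ∂μ ≤ ∫⁻ x in E, (t * b + μ E * t * b * Φ.ext (g x / b)) ∂μ :=
        lintegral_mono hpt
    _ = t * b * μ E + μ E * t * b * ∫⁻ x in E, Φ.ext (g x / b) ∂μ := by
        rw [lintegral_add_left measurable_const, setLIntegral_const,
          lintegral_const_mul' _ _ (by finiteness)]
    _ ≤ t * b * μ E + μ E * t * b * 1 := by gcongr
    _ = 2 * μ E * (t * b) := by ring

/-- The Orlicz form of Hölder's inequality against the indicator of `E`. -/
theorem setLIntegral_le_luxNormE (hE : μ E ≠ ⊤) (hL : luxNormE Φ μ E g ≠ ⊤) :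
    ∫⁻ x in E, g x ∂μ ≤ 2 * μ E * (Φ.inv (μ E)⁻¹ * luxNormE Φ μ E g) := by
  rcases eq_or_ne (μ E) 0 with hE0 | hE0
  · simp [Measure.restrict_eq_zero.mpr hE0]
  have hc0 : 2 * μ E ≠ 0 := mul_ne_zero two_ne_zero hE0
  have hct : 2 * μ E ≠ ⊤ := mul_ne_top ofNat_ne_top hE
  refine (ENNReal.div_le_iff' hc0 hct).mp (ENNReal.le_mul_of_forall_lt (.inr hL)
    (.inl (Φ.inv_ne_top (ENNReal.inv_ne_top.mpr hE0))) fun a ha b hb => ?_)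
  obtain ⟨t, hta, ht⟩ := Φ.exists_lt_toFun_of_inv_lt ha
  obtain ⟨hb0, hint⟩ := luxNormE_admissible_of_lt Φ hb
  rcases eq_or_ne b ⊤ with rfl | hbt
  · simp [ENNReal.mul_top (pos_of_gt ha).ne']
  refine ENNReal.div_le_of_le_mul' ?_
  calc ∫⁻ x in E, g x ∂μ ≤ 2 * μ E * (t * b) :=
        setLIntegral_le_of_admissible Φ hb0.ne' hbt hE0 hE ht.le hint
    _ ≤ 2 * μ E * (a * b) := by gcongr

theorem wLuxNormE_le {b : ℝ≥0∞} (hb : 0 < b)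
    (h : ∀ t : ℝ≥0, 0 < t → Φ.toFun t * μ {x | x ∈ E ∧ (t : ℝ≥0∞) < g x / b} ≤ 1) :
    wLuxNormE Φ μ E g ≤ b :=
  sInf_le ⟨hb, h⟩

theorem inv_mul_wLuxNormE_le {A : ℝ≥0∞} (h : ∀ x ∈ E, g x ≤ A) :
    Φ.inv (μ E)⁻¹ * wLuxNormE Φ μ E g ≤ A := by
  refine ENNReal.mul_le_of_forall_lt fun a ha b hb => not_lt.mp fun hA => hb.not_ge ?_
  refine wLuxNormE_le Φ (pos_iff_ne_zero.mpr (right_ne_zero_of_mul (pos_of_gt hA).ne'))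
    fun t _ => ?_
  rcases eq_empty_or_nonempty {x | x ∈ E ∧ (t : ℝ≥0∞) < g x / b} with hS | ⟨x, hxE, hx⟩
  · simp [hS]
  have hta : (t : ℝ≥0∞) < a :=
    hx.trans_le ((ENNReal.div_le_div_right (h x hxE) b).trans (ENNReal.div_lt_of_lt_mul hA).le)
  calc Φ.toFun t * μ {x | x ∈ E ∧ (t : ℝ≥0∞) < g x / b} ≤ (μ E)⁻¹ * μ E :=
        mul_le_mul' (Φ.toFun_le_of_lt_inv (hta.trans ha)) (measure_mono fun _ hx => hx.1)
    _ ≤ 1 := ENNReal.inv_mul_le_one _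

theorem wLuxNormE_le_two_mul_add (h : ∀ x ∈ E, g x ≤ g₁ x + g₂ x) :
    wLuxNormE Φ μ E g ≤ 2 * (wLuxNormE Φ μ E g₁ + wLuxNormE Φ μ E g₂) := by
  rw [← ENNReal.div_le_iff' two_ne_zero ofNat_ne_top]
  simp only [wLuxNormE]
  rw [ENNReal.sInf_add]
  refine le_iInf₂ fun b₁ ⟨hb₁, H₁⟩ => ?_
  rw [add_comm, ENNReal.sInf_add]
  refine le_iInf₂ fun b₂ ⟨hb₂, H₂⟩ => ENNReal.div_le_of_le_mul' ?_
  refine wLuxNormE_le Φ (by positivity) fun t ht => ?_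
  have hΦ2 : 2 * Φ.toFun t ≤ Φ.toFun (2 * t) := by exact_mod_cast Φ.natCast_mul_toFun_le 2 t
  have half {G : X → ℝ≥0∞} {b : ℝ≥0∞}
      (H : ∀ t : ℝ≥0, 0 < t → Φ.toFun t * μ {x | x ∈ E ∧ (t : ℝ≥0∞) < G x / b} ≤ 1) :
      Φ.toFun t * μ {x | x ∈ E ∧ ((2 * t : ℝ≥0) : ℝ≥0∞) < G x / b} ≤ 2⁻¹ := by
    rw [ENNReal.le_inv_iff_mul_le, mul_right_comm, mul_comm _ 2]
    exact (mul_le_mul_left hΦ2 _).trans (H _ (by positivity))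
  have hsub : {x | x ∈ E ∧ (t : ℝ≥0∞) < g x / (2 * (b₂ + b₁))} ⊆
      {x | x ∈ E ∧ ((2 * t : ℝ≥0) : ℝ≥0∞) < g₁ x / b₁} ∪
        {x | x ∈ E ∧ ((2 * t : ℝ≥0) : ℝ≥0∞) < g₂ x / b₂} := by
    rintro x ⟨hxE, hx⟩
    by_contra! hle
    simp only [mem_union, mem_ofPred_eq, not_or, not_and, not_lt] at hle
    have h2t : ((2 * t : ℝ≥0) : ℝ≥0∞) ≠ 0 := by positivity
    have hg₁ := (ENNReal.div_le_iff_le_mul (.inl hb₁.ne') (.inr h2t)).mp (hle.1 hxE)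
    have hg₂ := (ENNReal.div_le_iff_le_mul (.inl hb₂.ne') (.inr h2t)).mp (hle.2 hxE)
    refine hx.not_ge (ENNReal.div_le_of_le_mul ?_)
    calc g x ≤ g₁ x + g₂ x := h x hxE
      _ ≤ ((2 * t : ℝ≥0) : ℝ≥0∞) * b₁ + ((2 * t : ℝ≥0) : ℝ≥0∞) * b₂ := add_le_add hg₁ hg₂
      _ = t * (2 * (b₂ + b₁)) := by push_cast; ring
  calc Φ.toFun t * μ {x | x ∈ E ∧ (t : ℝ≥0∞) < g x / (2 * (b₂ + b₁))}
      ≤ Φ.toFun t * μ {x | x ∈ E ∧ ((2 * t : ℝ≥0) : ℝ≥0∞) < g₁ x / b₁} +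
          Φ.toFun t * μ {x | x ∈ E ∧ ((2 * t : ℝ≥0) : ℝ≥0∞) < g₂ x / b₂} := by
        rw [← mul_add]; exact mul_le_mul_right ((measure_mono hsub).trans (measure_union_le _ _)) _
    _ ≤ 2⁻¹ + 2⁻¹ := add_le_add (half H₁) (half H₂)
    _ = 1 := ENNReal.inv_two_add_inv_two

theorem toFun_mul_lintegral_indicator_le {s : ℝ≥0} {b : ℝ≥0∞} (hb0 : b ≠ 0) (hbt : b ≠ ⊤) :
    Φ.toFun s * ∫⁻ x, {y | s * b < g y}.indicator g x ∂μ ≤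
      s * b * ∫⁻ x, Φ.ext (g x / b) ∂μ := by
  refine (lintegral_const_mul_le _ _).trans ?_
  rw [← lintegral_const_mul' _ _ (by finiteness)]
  refine lintegral_mono fun y => ?_
  by_cases hy : (s : ℝ≥0∞) * b < g y
  · rw [indicator_of_mem (show y ∈ {y | (s : ℝ≥0∞) * b < g y} from hy)]
    have hsu : (s : ℝ≥0∞) ≤ g y / b := (ENNReal.le_div_iff_mul_le (.inl hb0) (.inl hbt)).mpr hy.le
    calc Φ.toFun s * g y = Φ.toFun s * (g y / b) * b := by
          rw [mul_assoc, ENNReal.div_mul_cancel hb0 hbt]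
      _ ≤ s * Φ.ext (g y / b) * b := mul_le_mul_left (Φ.toFun_mul_le_mul_ext hsu) b
      _ = s * b * Φ.ext (g y / b) := by ring
  · simp [indicator_of_notMem (show y ∉ {y | (s : ℝ≥0∞) * b < g y} from hy)]

end Luxemburg

section Maximal

variable {n : ℕ}

/-- `hlMaximal n f` is `maximalENN n (‖f ·‖₊)` by definition. -/
def maximalENN (n : ℕ) (G : En n → ℝ≥0∞) (z : En n) : ℝ≥0∞ :=
  ⨆ (t : ℝ) (_ : 0 < t), (volume (ball z t))⁻¹ * ∫⁻ y in ball z t, G y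

theorem volume_ball_eq (x : En n) {t : ℝ} (ht : 0 < t) :
    volume (ball x t) = ENNReal.ofReal (t ^ n) * volume (ball (0 : En n) 1) := by
  rw [Measure.addHaar_ball_of_pos volume x ht, finrank_euclideanSpace_fin]

theorem volume_closedBall_eq (x : En n) {t : ℝ} (ht : 0 ≤ t) :
    volume (closedBall x t) = ENNReal.ofReal (t ^ n) * volume (ball (0 : En n) 1) := by
  rw [Measure.addHaar_closedBall volume x ht, finrank_euclideanSpace_fin]

theorem average_ball_le_maximalENN (G : En n → ℝ≥0∞) (z : En n) {t : ℝ} (ht : 0 < t) :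
    (volume (ball z t))⁻¹ * ∫⁻ y in ball z t, G y ≤ maximalENN n G z :=
  le_iSup₂_of_le t ht le_rfl

theorem maximalENN_le_add_of_le {G H : En n → ℝ≥0∞} {c : ℝ≥0∞} (h : ∀ y, G y ≤ c + H y)
    (z : En n) : maximalENN n G z ≤ c + maximalENN n H z := by
  refine iSup₂_le fun t ht => ?_
  have hB0 : volume (ball z t) ≠ 0 := (measure_ball_pos volume z ht).ne'
  have hBt : volume (ball z t) ≠ ⊤ := measure_ball_lt_top.ne
  calc (volume (ball z t))⁻¹ * ∫⁻ y in ball z t, G y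
      ≤ (volume (ball z t))⁻¹ * ∫⁻ y in ball z t, (c + H y) := by gcongr with y; exact h y
    _ = c * ((volume (ball z t))⁻¹ * volume (ball z t)) +
          (volume (ball z t))⁻¹ * ∫⁻ y in ball z t, H y := by
        rw [lintegral_add_left measurable_const, setLIntegral_const]; ring
    _ ≤ c + maximalENN n H z := by
        rw [ENNReal.inv_mul_cancel hB0 hBt, mul_one]
        exact add_le_add_right (average_ball_le_maximalENN H z ht) c

theorem exists_mul_volume_lt_of_lt_maximalENN {G : En n → ℝ≥0∞} {β : ℝ≥0∞} {z : En n}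
    (h : β < maximalENN n G z) :
    ∃ t : ℝ, 0 < t ∧ β * volume (ball z t) < ∫⁻ y in ball z t, G y := by
  obtain ⟨t, ht⟩ := lt_iSup_iff.mp h
  obtain ⟨ht0, hlt⟩ := lt_iSup_iff.mp ht
  refine ⟨t, ht0, ?_⟩
  rw [← ENNReal.div_eq_inv_mul] at hlt
  exact (ENNReal.lt_div_iff_mul_lt (.inl (measure_ball_pos volume z ht0).ne')
    (.inl measure_ball_lt_top.ne)).mp hlt

theorem le_max_one_toReal_of_mul_volume_ball_le (hn : 0 < n) {β I : ℝ≥0∞} (hβ0 : β ≠ 0)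
    (hβt : β ≠ ⊤) (hI : I ≠ ⊤) {z : En n} {t : ℝ} (ht : 0 < t) (h : β * volume (ball z t) ≤ I) :
    t ≤ max 1 (I / (β * volume (ball (0 : En n) 1))).toReal := by
  set V := volume (ball (0 : En n) 1)
  have hV0 : V ≠ 0 := (measure_ball_pos volume _ one_pos).ne'
  rcases le_or_gt t 1 with h1 | h1
  · exact h1.trans (le_max_left _ _)
  have htn : ENNReal.ofReal (t ^ n) ≤ I / (β * V) := by
    refine ENNReal.le_div_iff_mul_le (.inl (mul_ne_zero hβ0 hV0))
      (.inl (mul_ne_top hβt measure_ball_lt_top.ne)) |>.mpr ?_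
    calc ENNReal.ofReal (t ^ n) * (β * V) = β * volume (ball z t) := by
          rw [volume_ball_eq z ht]; ring
      _ ≤ I := h
  calc t ≤ t ^ n := le_self_pow₀ h1.le hn.ne'
    _ ≤ (I / (β * V)).toReal := by
        simpa [ENNReal.toReal_ofReal (by positivity : (0 : ℝ) ≤ t ^ n)] using
          ENNReal.toReal_mono (ENNReal.div_ne_top hI (mul_ne_zero hβ0 hV0)) htn
    _ ≤ _ := le_max_right _ _

/-- The weak type `(1,1)` inequality, via the Vitali covering lemma. -/
theorem mul_volume_lt_maximalENN_le (hn : 0 < n) (G : En n → ℝ≥0∞) {β : ℝ≥0∞} (hβ0 : β ≠ 0)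
    (hβt : β ≠ ⊤) : β * volume {z | β < maximalENN n G z} ≤ 4 ^ n * ∫⁻ y, G y := by
  rcases eq_or_ne (∫⁻ y, G y) ⊤ with hIG | hIG
  · simp [hIG]
  set S := {z | β < maximalENN n G z}
  have hrad (z : En n) (hz : z ∈ S) : ∃ t : ℝ, 0 < t ∧
      t ≤ max 1 ((∫⁻ y, G y) / (β * volume (ball (0 : En n) 1))).toReal ∧
      β * volume (ball z t) < ∫⁻ y in ball z t, G y := by
    obtain ⟨t, ht0, hlt⟩ := exists_mul_volume_lt_of_lt_maximalENN hz
    exact ⟨t, ht0, le_max_one_toReal_of_mul_volume_ball_le hn hβ0 hβt hIG ht0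
      (hlt.le.trans (setLIntegral_le_lintegral _ _)), hlt⟩
  choose! rad hrad0 hradR hradI using hrad
  obtain ⟨u, huS, hu_disj, hu_cov⟩ :=
    Vitali.exists_disjoint_subfamily_covering_enlargement_closedBall S id rad _ hradR 4
      (by norm_num)
  have hu : u.Countable := hu_disj.countable_of_nonempty_interior fun b hb =>
    ⟨b, ball_subset_interior_closedBall (mem_ball_self (hrad0 b (huS hb)))⟩
  have hcover : S ⊆ ⋃ b ∈ u, closedBall b (4 * rad b) := fun z hz =>
    let ⟨b, hbu, hsub⟩ := hu_cov z hz
    mem_biUnion hbu (hsub (mem_closedBall_self (hrad0 z hz).le))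
  calc β * volume S ≤ β * ∑' b : u, volume (closedBall (b : En n) (4 * rad b)) :=
        mul_le_mul_right ((measure_mono hcover).trans (measure_biUnion_le volume hu _)) _
    _ = 4 ^ n * ∑' b : u, β * volume (ball (b : En n) (rad b)) := by
        simp only [← ENNReal.tsum_mul_left]
        refine tsum_congr fun b => ?_
        have h0 := hrad0 b (huS b.2)
        rw [volume_closedBall_eq _ (by positivity), volume_ball_eq _ h0, mul_pow,
          ENNReal.ofReal_mul (by positivity), ENNReal.ofReal_pow zero_le_four]
        simp only [ENNReal.ofReal_ofNat]; ring
    _ ≤ 4 ^ n * ∑' b : u, ∫⁻ y in ball (b : En n) (rad b), G y := by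
        gcongr with b
        exact (hradI b (huS b.2)).le
    _ = 4 ^ n * ∫⁻ y in ⋃ b ∈ u, ball b (rad b), G y := by
        rw [lintegral_biUnion (s := fun b => ball b (rad b)) hu (fun _ _ => measurableSet_ball)
          (hu_disj.mono fun _ => ball_subset_closedBall)]
    _ ≤ 4 ^ n * ∫⁻ y, G y := mul_le_mul_right (setLIntegral_le_lintegral _ _) _

theorem wLuxNormE_maximalENN_le (hn : 0 < n) (Φ : YoungFunction) (G : En n → ℝ≥0∞)
    (U : Set (En n)) :
    wLuxNormE Φ volume U (maximalENN n G) ≤ 2 * 4 ^ n * luxNormE Φ volume univ G := by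
  have hκ0 : (2 * 4 ^ n : ℝ≥0∞) ≠ 0 := by positivity
  have hκt : (2 * 4 ^ n : ℝ≥0∞) ≠ ⊤ := by finiteness
  rw [← ENNReal.div_le_iff' hκ0 hκt]
  refine le_sInf fun b ⟨hb0, hint⟩ => ?_
  rw [Measure.restrict_univ] at hint
  rcases eq_or_ne b ⊤ with rfl | hbt
  · exact le_top
  refine ENNReal.div_le_of_le_mul' (wLuxNormE_le Φ (by positivity) fun t ht => ?_)
  set s : ℝ≥0 := 4 ^ n * t
  set β : ℝ≥0∞ := s * b
  set H := {y | β < G y}.indicator G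
  have hβ0 : β ≠ 0 := mul_ne_zero (by positivity) hb0.ne'
  have hβt : β ≠ ⊤ := mul_ne_top coe_ne_top hbt
  set S := {x | x ∈ U ∧ (t : ℝ≥0∞) < maximalENN n G x / (2 * 4 ^ n * b)}
  have hsub : S ⊆ {z | β < maximalENN n H z} := by
    rintro x ⟨-, hx⟩
    have hGH (y : En n) : G y ≤ β + H y := by
      by_cases hy : β < G y
      · exact le_add_left (indicator_of_mem (show y ∈ {y | β < G y} from hy) G).ge
      · exact le_add_right (not_lt.mp hy)
    have hββ : β + β < maximalENN n G x := by
      convert (ENNReal.lt_div_iff_mul_lt (.inl (by positivity)) (.inl (by finiteness))).mp hx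
        using 1
      simp only [β, s]; push_cast; ring
    exact (ENNReal.add_lt_add_iff_left hβt).mp (hββ.trans_le (maximalENN_le_add_of_le hGH x))
  have hH : Φ.toFun s * ∫⁻ y, H y ≤ β :=
    (toFun_mul_lintegral_indicator_le Φ hb0.ne' hbt).trans (by simpa using mul_le_mul_right hint β)
  have h4 : (4 ^ n : ℝ≥0∞) * Φ.toFun t ≤ Φ.toFun s := by
    simpa [s] using Φ.natCast_mul_toFun_le (4 ^ n) t
  refine (ENNReal.mul_le_mul_iff_right (mul_ne_zero hβ0 (pow_ne_zero n four_ne_zero))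
    (mul_ne_top hβt (pow_ne_top ofNat_ne_top))).mp ?_
  calc β * 4 ^ n * (Φ.toFun t * volume S) = (4 ^ n * Φ.toFun t) * (β * volume S) := by ring
    _ ≤ Φ.toFun s * (4 ^ n * ∫⁻ y, H y) := mul_le_mul' h4
        ((mul_le_mul_right (measure_mono hsub) β).trans
          (mul_volume_lt_maximalENN_le hn H hβ0 hβt))
    _ ≤ β * 4 ^ n * 1 := by
        rw [mul_left_comm, mul_one, mul_comm β]; exact mul_le_mul_right hH _

theorem maximalENN_le_indicator_add {F : En n → ℝ≥0∞} {x z : En n} {r : ℝ} {A : ℝ≥0∞}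
    (hz : z ∈ ball x r)
    (hfar : ∀ t, r ≤ t → (volume (ball z t))⁻¹ * ∫⁻ y in ball z t, F y ≤ A) :
    maximalENN n F z ≤ maximalENN n ((ball x (2 * r)).indicator F) z + A := by
  refine iSup₂_le fun t ht => ?_
  rcases lt_or_ge t r with htr | htr
  · have hsub : ball z t ⊆ ball x (2 * r) := fun y hy => by
      have := dist_triangle y z x
      rw [mem_ball] at hy hz ⊢
      linarith
    refine le_add_right ((le_of_eq ?_).trans (average_ball_le_maximalENN _ z ht))
    congr 1
    exact setLIntegral_congr_fun measurableSet_ball fun y hy => (indicator_of_mem (hsub hy) F).symm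
  · exact le_add_left (hfar t htr)

end Maximal

namespace YoungFunction

variable {n : ℕ} (Φ : YoungFunction)

theorem inv_inv_volume_ball_le {k : ℕ} (hk : (volume (ball (0 : En n) 1))⁻¹ ≤ k) (x : En n)
    {s : ℝ} (hs : 0 < s) : Φ.inv (volume (ball x s))⁻¹ ≤ k * Φ.invNegPow n s := by
  have hk0 : 0 < k := Nat.pos_of_ne_zero fun h => by
    simp only [h, CharP.cast_eq_zero, nonpos_iff_eq_zero, ENNReal.inv_eq_zero] at hk
    exact measure_ball_lt_top.ne hk
  refine Φ.inv_le_natCast_mul hk0 ?_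
  rw [volume_ball_eq x hs, ENNReal.mul_inv (.inl (ENNReal.ofReal_pos.mpr (by positivity)).ne')
    (.inl ofReal_ne_top), ENNReal.ofReal_rpow_neg_natCast hs, mul_comm (k : ℝ≥0∞)]
  exact mul_le_mul_right hk _

theorem invNegPow_le_inv_inv_volume_ball {k : ℕ} (hk : volume (ball (0 : En n) 1) ≤ k)
    (x : En n) {s : ℝ} (hs : 0 < s) : Φ.invNegPow n s ≤ k * Φ.inv (volume (ball x s))⁻¹ := by
  have hV0 : volume (ball (0 : En n) 1) ≠ 0 := (measure_ball_pos volume _ one_pos).ne'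
  have hk0 : 0 < k := Nat.pos_of_ne_zero fun h => by simp_all
  refine Φ.inv_le_natCast_mul hk0 ?_
  have h0 : ENNReal.ofReal (s ^ n) ≠ 0 := (ENNReal.ofReal_pos.mpr (by positivity)).ne'
  rw [volume_ball_eq x hs, ENNReal.mul_inv (.inl h0) (.inl ofReal_ne_top),
    ENNReal.ofReal_rpow_neg_natCast hs, ← mul_assoc, mul_comm (k : ℝ≥0∞), mul_assoc]
  calc (ENNReal.ofReal (s ^ n))⁻¹
      = (ENNReal.ofReal (s ^ n))⁻¹ *
          (volume (ball (0 : En n) 1) * (volume (ball (0 : En n) 1))⁻¹) := by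
        rw [ENNReal.mul_inv_cancel hV0 measure_ball_lt_top.ne, mul_one]
    _ ≤ (ENNReal.ofReal (s ^ n))⁻¹ * (k * (volume (ball (0 : En n) 1))⁻¹) := by gcongr

def tailSup (n : ℕ) (F : En n → ℝ≥0∞) (x : En n) (r : ℝ) : ℝ≥0∞ :=
  ⨆ (t : ℝ) (_ : r < t), Φ.invNegPow n t * luxNormE Φ volume (ball x t) F

theorem le_tailSup {F : En n → ℝ≥0∞} {x : En n} {r t : ℝ} (hrt : r < t) :
    Φ.invNegPow n t * luxNormE Φ volume (ball x t) F ≤ Φ.tailSup n F x r :=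
  le_iSup₂_of_le t hrt le_rfl

theorem invNegPow_mul_luxNormE_le_tailSup {F : En n → ℝ≥0∞} {x : En n} {r : ℝ} (hr : 0 < r) :
    Φ.invNegPow n r * luxNormE Φ volume (ball x (2 * r)) F ≤ 3 ^ n * Φ.tailSup n F x r := by
  have hJ : Φ.invNegPow n r ≤ (3 ^ n : ℕ) * Φ.invNegPow n (3 * r) :=
    Φ.invNegPow_le_natCast_mul hr (by positivity) (by push_cast; rw [mul_pow])
  calc Φ.invNegPow n r * luxNormE Φ volume (ball x (2 * r)) F
      ≤ (3 ^ n : ℕ) * Φ.invNegPow n (3 * r) * luxNormE Φ volume (ball x (3 * r)) F :=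
        mul_le_mul' hJ (luxNormE_mono_set Φ (ball_subset_ball (by linarith)))
    _ ≤ 3 ^ n * Φ.tailSup n F x r := by
        rw [mul_assoc]; push_cast; exact mul_le_mul_right (Φ.le_tailSup (by linarith)) _

theorem invNegPow_mul_wLuxNormE_maximalENN_indicator_le (hn : 0 < n) (F : En n → ℝ≥0∞)
    (x : En n) {r : ℝ} (hr : 0 < r) :
    Φ.invNegPow n r *
        wLuxNormE Φ volume (ball x r) (maximalENN n ((ball x (2 * r)).indicator F)) ≤
      2 * 4 ^ n * 3 ^ n * Φ.tailSup n F x r := by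
  calc _ ≤ Φ.invNegPow n r * (2 * 4 ^ n * luxNormE Φ volume (ball x (2 * r)) F) := by
        gcongr
        rw [← luxNormE_univ_indicator Φ measurableSet_ball]
        exact wLuxNormE_maximalENN_le hn Φ _ _
    _ ≤ 2 * 4 ^ n * (3 ^ n * Φ.tailSup n F x r) := by
        rw [mul_left_comm]; exact mul_le_mul_right (Φ.invNegPow_mul_luxNormE_le_tailSup hr) _
    _ = 2 * 4 ^ n * 3 ^ n * Φ.tailSup n F x r := by ring

theorem average_ball_le_tailSup {k : ℕ} (hk : (volume (ball (0 : En n) 1))⁻¹ ≤ k)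
    {F : En n → ℝ≥0∞} {x z : En n} {r t : ℝ} (hr : 0 < r) (hrt : r ≤ t) (hz : z ∈ ball x r)
    (hJ : Φ.invNegPow n r ≠ 0) (hT : Φ.tailSup n F x r ≠ ⊤) :
    (volume (ball z t))⁻¹ * ∫⁻ y in ball z t, F y ≤ 2 * 3 ^ n * k * Φ.tailSup n F x r := by
  have ht : 0 < t := hr.trans_le hrt
  have hs : 0 < 3 * t := by positivity
  have hsub : ball z t ⊆ ball x (3 * t) := fun y hy => by
    have := dist_triangle y z x
    rw [mem_ball] at hy hz ⊢
    linarith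
  have hvol : volume (ball x (3 * t)) = 3 ^ n * volume (ball z t) := by
    rw [Measure.addHaar_ball_mul_of_pos volume x three_pos, finrank_euclideanSpace_fin,
      Measure.addHaar_ball_center volume z, ENNReal.ofReal_pow zero_le_three, ENNReal.ofReal_ofNat]
  have hTs := Φ.le_tailSup (F := F) (x := x) (by linarith : r < 3 * t)
  have hL : luxNormE Φ volume (ball x (3 * t)) F ≠ ⊤ := fun hL => hT (top_le_iff.mp (by
    rwa [hL, ENNReal.mul_top (Φ.invNegPow_ne_zero hr hs hJ)] at hTs))
  have hB0 : volume (ball z t) ≠ 0 := (measure_ball_pos volume z ht).ne'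
  have hBt : volume (ball z t) ≠ ⊤ := measure_ball_lt_top.ne
  calc (volume (ball z t))⁻¹ * ∫⁻ y in ball z t, F y
      ≤ (volume (ball z t))⁻¹ * ∫⁻ y in ball x (3 * t), F y := by gcongr
    _ ≤ (volume (ball z t))⁻¹ * (2 * volume (ball x (3 * t)) *
          (Φ.inv (volume (ball x (3 * t)))⁻¹ * luxNormE Φ volume (ball x (3 * t)) F)) := by
        gcongr; exact setLIntegral_le_luxNormE Φ measure_ball_lt_top.ne hL
    _ = 2 * 3 ^ n * (Φ.inv (volume (ball x (3 * t)))⁻¹ * luxNormE Φ volume (ball x (3 * t)) F) := by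
        rw [hvol, ← mul_assoc, ← mul_assoc, mul_left_comm _ 2, mul_left_comm _ (3 ^ n),
          ENNReal.inv_mul_cancel hB0 hBt, mul_one, mul_assoc]
    _ ≤ 2 * 3 ^ n * (k * Φ.invNegPow n (3 * t) * luxNormE Φ volume (ball x (3 * t)) F) := by
        gcongr
        exact Φ.inv_inv_volume_ball_le hk x hs
    _ ≤ 2 * 3 ^ n * k * Φ.tailSup n F x r := by
        rw [mul_assoc _ (k : ℝ≥0∞), mul_assoc (k : ℝ≥0∞)]; gcongr

theorem exists_invNegPow_mul_wLuxNormE_maximalENN_le (hn : 0 < n) :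
    ∃ c : ℝ≥0, ∀ (F : En n → ℝ≥0∞) (x : En n) (r : ℝ), 0 < r →
      Φ.invNegPow n r * wLuxNormE Φ volume (ball x r) (maximalENN n F) ≤
        c * Φ.tailSup n F x r := by
  set V := volume (ball (0 : En n) 1)
  obtain ⟨k, hk⟩ := ENNReal.exists_nat_gt (max_ne_top (ENNReal.inv_ne_top.mpr
    (measure_ball_pos volume (0 : En n) one_pos).ne')
    (measure_ball_lt_top (μ := volume) (x := (0 : En n)) (r := 1)).ne)
  have hkV : V⁻¹ ≤ k := (le_max_left _ _).trans hk.le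
  have hkV' : V ≤ k := (le_max_right _ _).trans hk.le
  refine ⟨2 * (2 * 4 ^ n * 3 ^ n + k * (2 * 3 ^ n * k)), fun F x r hr => ?_⟩
  set T := Φ.tailSup n F x r
  rcases eq_or_ne (Φ.invNegPow n r) 0 with hJ | hJ
  · simp [hJ]
  rcases eq_or_ne T ⊤ with hT | hT
  · simp [hT]
  set A := 2 * 3 ^ n * k * T
  have hdec (z : En n) (hz : z ∈ ball x r) :
      maximalENN n F z ≤ maximalENN n ((ball x (2 * r)).indicator F) z + A :=
    maximalENN_le_indicator_add hz fun t htr =>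
      Φ.average_ball_le_tailSup hkV hr htr hz hJ hT
  have hnear := Φ.invNegPow_mul_wLuxNormE_maximalENN_indicator_le hn F x hr
  have hconst : Φ.invNegPow n r * wLuxNormE Φ volume (ball x r) (fun _ => A) ≤ k * A :=
    calc _ ≤ k * Φ.inv (volume (ball x r))⁻¹ * wLuxNormE Φ volume (ball x r) (fun _ => A) := by
          gcongr
          exact Φ.invNegPow_le_inv_inv_volume_ball hkV' x hr
      _ ≤ k * A := by
          rw [mul_assoc]; gcongr; exact inv_mul_wLuxNormE_le Φ fun _ _ => le_rfl
  calc Φ.invNegPow n r * wLuxNormE Φ volume (ball x r) (maximalENN n F)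
      ≤ Φ.invNegPow n r * (2 * (wLuxNormE Φ volume (ball x r)
          (maximalENN n ((ball x (2 * r)).indicator F)) +
            wLuxNormE Φ volume (ball x r) (fun _ => A))) := by
        gcongr; exact wLuxNormE_le_two_mul_add Φ (g₂ := fun _ => A) hdec
    _ ≤ 2 * (2 * 4 ^ n * 3 ^ n * T + k * A) := by
        rw [mul_left_comm, mul_add]; gcongr
    _ = _ := by simp only [A]; push_cast; ring

variable {φ : En n → ℝ → ℝ} {F : En n → ℝ≥0∞}

theorem le_morreyNormE (x : En n) {r : ℝ} (hr : 0 < r) :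
    (ENNReal.ofReal (φ x r))⁻¹ * Φ.invNegPow n r * luxNormE Φ volume (ball x r) F ≤
      morreyNormE n Φ φ F :=
  le_iSup₂_of_le x r (le_iSup_of_le hr le_rfl)

theorem luxNormE_ball_le_essSup_mul_morreyNormE (hφ : ∀ x r, 0 < r → 0 < φ x r) (x : En n)
    {t : ℝ} (ht : 0 < t) (hJ : Φ.invNegPow n t ≠ 0) :
    luxNormE Φ volume (ball x t) F ≤
      essSup (fun s => ENNReal.ofReal (φ x s) / Φ.invNegPow n s) (volume.restrict (Ioi t)) *
        morreyNormE n Φ φ F := by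
  have : (ae (volume.restrict (Ioi t))).NeBot := ae_neBot.mpr (by
    rw [Ne, Measure.restrict_eq_zero, Real.volume_Ioi]; exact top_ne_zero)
  obtain ⟨s, hst, hs⟩ := ((ae_restrict_mem (μ := volume) (measurableSet_Ioi (a := t))).and
    (ENNReal.ae_le_essSup fun s => ENNReal.ofReal (φ x s) / Φ.invNegPow n s)).exists
  have hs0 : 0 < s := ht.trans hst
  have hφ0 : ENNReal.ofReal (φ x s) ≠ 0 := (ENNReal.ofReal_pos.mpr (hφ x s hs0)).ne'
  have hJs : Φ.invNegPow n s ≠ 0 := Φ.invNegPow_ne_zero ht hs0 hJ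
  have hJt : Φ.invNegPow n s ≠ ⊤ := Φ.invNegPow_ne_top hs0
  calc luxNormE Φ volume (ball x t) F ≤ luxNormE Φ volume (ball x s) F :=
        luxNormE_mono_set Φ (ball_subset_ball hst.le)
    _ = (ENNReal.ofReal (φ x s) * (ENNReal.ofReal (φ x s))⁻¹) *
          ((Φ.invNegPow n s)⁻¹ * Φ.invNegPow n s) * luxNormE Φ volume (ball x s) F := by
        rw [ENNReal.mul_inv_cancel hφ0 ofReal_ne_top, ENNReal.inv_mul_cancel hJs hJt, one_mul,
          one_mul]
    _ = ENNReal.ofReal (φ x s) / Φ.invNegPow n s *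
          ((ENNReal.ofReal (φ x s))⁻¹ * Φ.invNegPow n s * luxNormE Φ volume (ball x s) F) := by
        rw [div_eq_mul_inv]; ring
    _ ≤ _ := mul_le_mul' hs (Φ.le_morreyNormE x hs0)

theorem tailSup_le_mul_morreyNormE (hφ : ∀ x r, 0 < r → 0 < φ x r) (x : En n) {r : ℝ}
    (hr : 0 < r) :
    Φ.tailSup n F x r ≤
      (⨆ (t : ℝ) (_ : r < t), Φ.invNegPow n t *
        essSup (fun s => ENNReal.ofReal (φ x s) / Φ.invNegPow n s) (volume.restrict (Ioi t))) *
        morreyNormE n Φ φ F := by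
  refine iSup₂_le fun t hrt => ?_
  rcases eq_or_ne (Φ.invNegPow n t) 0 with hJ | hJ
  · simp [hJ]
  calc Φ.invNegPow n t * luxNormE Φ volume (ball x t) F
      ≤ Φ.invNegPow n t * (essSup (fun s => ENNReal.ofReal (φ x s) / Φ.invNegPow n s)
          (volume.restrict (Ioi t)) * morreyNormE n Φ φ F) :=
        mul_le_mul_right (Φ.luxNormE_ball_le_essSup_mul_morreyNormE hφ x (hr.trans hrt) hJ) _
    _ ≤ _ := by
        rw [← mul_assoc]
        refine mul_le_mul_left ?_ _
        exact le_iSup₂_of_le t hrt le_rfl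

end YoungFunction

theorem hlMaximal_orliczMorrey_weak_bounded_general
    (n : ℕ) (hn : 0 < n) (Φ : YoungFunction)
    (φ₁ φ₂ : En n → ℝ → ℝ)
    (hφ₁pos : ∀ (x : En n) (r : ℝ), 0 < r → 0 < φ₁ x r)
    (hφ₂pos : ∀ (x : En n) (r : ℝ), 0 < r → 0 < φ₂ x r)
    (C : ℝ)
    (hcond : ∀ (x : En n) (r : ℝ), 0 < r →
      (⨆ (t : ℝ) (_ : r < t),
        Φ.inv (ENNReal.ofReal t ^ (-(n : ℝ))) *
          essSup (fun s : ℝ =>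
              ENNReal.ofReal (φ₁ x s) / Φ.inv (ENNReal.ofReal s ^ (-(n : ℝ))))
            (volume.restrict (Ioi t))) ≤
        ENNReal.ofReal C * ENNReal.ofReal (φ₂ x r)) :
    ∃ C' : ℝ, 0 < C' ∧ ∀ f : En n → ℝ, LocallyIntegrable f volume →
      wMorreyNormE n Φ φ₂ (hlMaximal n f) ≤
        ENNReal.ofReal C' * morreyNorm n Φ φ₁ f := by
  obtain ⟨c, hc⟩ := Φ.exists_invNegPow_mul_wLuxNormE_maximalENN_le hn
  refine ⟨c * |C| + 1, by positivity, fun f _ => iSup₂_le fun x r => iSup_le fun hr => ?_⟩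
  set N := morreyNorm n Φ φ₁ f
  have hφ₂ : ENNReal.ofReal (φ₂ x r) ≠ 0 := (ENNReal.ofReal_pos.mpr (hφ₂pos x r hr)).ne'
  have hlocal : Φ.invNegPow n r * wLuxNormE Φ volume (ball x r) (hlMaximal n f) ≤
      c * (ENNReal.ofReal C * ENNReal.ofReal (φ₂ x r) * N) :=
    (hc _ x r hr).trans (mul_le_mul_right ((Φ.tailSup_le_mul_morreyNormE hφ₁pos x hr).trans
      (mul_le_mul_left (hcond x r hr) _)) _)
  have hcC : (c : ℝ≥0∞) * ENNReal.ofReal C ≤ ENNReal.ofReal (c * |C| + 1) := by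
    rw [← ENNReal.ofReal_coe_nnreal, ← ENNReal.ofReal_mul c.coe_nonneg]
    exact ENNReal.ofReal_le_ofReal (by nlinarith [le_abs_self C, c.coe_nonneg])
  calc (ENNReal.ofReal (φ₂ x r))⁻¹ * Φ.invNegPow n r *
        wLuxNormE Φ volume (ball x r) (hlMaximal n f)
      ≤ (ENNReal.ofReal (φ₂ x r))⁻¹ * (c * (ENNReal.ofReal C * ENNReal.ofReal (φ₂ x r) * N)) := by
        rw [mul_assoc]; exact mul_le_mul_right hlocal _
    _ = c * ENNReal.ofReal C * N * ((ENNReal.ofReal (φ₂ x r))⁻¹ * ENNReal.ofReal (φ₂ x r)) := by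
        ring
    _ = c * ENNReal.ofReal C * N := by rw [ENNReal.inv_mul_cancel hφ₂ ofReal_ne_top, mul_one]
    _ ≤ ENNReal.ofReal (c * |C| + 1) * N := by gcongr

/-- For any Young function `Φ`, the Hardy–Littlewood maximal operator is
bounded from `M_{Φ,φ₁}(ℝⁿ)` to `WM_{Φ,φ₂}(ℝⁿ)` under the supremal condition on `(φ₁,φ₂)`. -/
theorem hlMaximal_orliczMorrey_weak_bounded
    (n : ℕ) (hn : 0 < n) (Φ : YoungFunction)
    (φ₁ φ₂ : En n → ℝ → ℝ)
    (hφ₁pos : ∀ (x : En n) (r : ℝ), 0 < r → 0 < φ₁ x r)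
    (hφ₂pos : ∀ (x : En n) (r : ℝ), 0 < r → 0 < φ₂ x r)
    (hφ₁m : Measurable (Function.uncurry φ₁))
    (hφ₂m : Measurable (Function.uncurry φ₂))
    (C : ℝ) (hC : 0 < C)
    (hcond : ∀ (x : En n) (r : ℝ), 0 < r →
      (⨆ (t : ℝ) (_ : r < t),
        Φ.inv (ENNReal.ofReal t ^ (-(n : ℝ))) *
          essSup (fun s : ℝ =>
              ENNReal.ofReal (φ₁ x s) / Φ.inv (ENNReal.ofReal s ^ (-(n : ℝ))))
            (volume.restrict (Ioi t))) ≤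
        ENNReal.ofReal C * ENNReal.ofReal (φ₂ x r)) :
    ∃ C' : ℝ, 0 < C' ∧ ∀ f : En n → ℝ, LocallyIntegrable f volume →
      wMorreyNormE n Φ φ₂ (hlMaximal n f) ≤
        ENNReal.ofReal C' * morreyNorm n Φ φ₁ f :=
  hlMaximal_orliczMorrey_weak_bounded_general n hn Φ φ₁ φ₂ hφ₁pos hφ₂pos C hcond

end
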